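/- Let τ ∈ ℂ with Im τ > 0, let N, n ≥ 1, let z₁,…,z_n ∈ ℂ, let A₁,…,A_n be N×N complex matrices with ∑_{k=1}^n (A_k)_{ii} = 0 for each i, and let P₁,…,P_N, Q₁,…,Q_N ∈ ℂ. Let z ∈ ℂ be such that θ₁(z−z_k|τ) ≠ 0 and θ₁(z+τ−z_k|τ) ≠ 0 for all k, and θ₁(Q_j−Q_i|τ) ≠ 0 for all i ≠ j. Define (L_z(z))_{ij} = δ_{ij}(P_i + ∑_k (θ₁'(z−z_k|τ)/θ₁(z−z_k|τ))(A_k)_{ii}) − (1−δ_{ij})∑_k x(Q_j−Q_i, z−z_k)(A_k)_{ij}, and (L_τ(z))_{ij} = −(1/2)δ_{ij}∑_k (θ₁''(z−z_k|τ)/θ₁(z−z_k|τ))(A_k)_{ii} − (1−δ_{ij})∑_k y(Q_j−Q_i, z−z_k)(A_k)_{ij}, where y = ∂_ξ x. Then L_τ(z+τ) = E⁻¹·(L_τ(z) + 2πi·L_z(z))·E − 2πi·diag(P₁,…,P_N), where E is the diagonal matrix with E_{ii} = exp(2πi Q_i). -/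

import Mathlib

open Complex


/-- The Jacobi theta function `θ₁(z|τ)` for `τ` in the upper half-plane. -/
noncomputable def theta1 (τ z : ℂ) : ℂ :=
  -Complex.I * ∑' n : ℤ, (-1 : ℂ) ^ n *
    Complex.exp ((Real.pi : ℂ) * Complex.I * τ * ((n : ℂ) + 1/2) ^ 2 +
      2 * (Real.pi : ℂ) * Complex.I * ((n : ℂ) + 1/2) * z)

/-- The Lamé function `x(ξ,z) = θ₁(z-ξ|τ)·θ₁'(0|τ) / (θ₁(z|τ)·θ₁(ξ|τ))`. -/
noncomputable def lame (τ ξ z : ℂ) : ℂ :=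
  theta1 τ (z - ξ) * deriv (theta1 τ) 0 / (theta1 τ z * theta1 τ ξ)

/-- `y(ξ,z) = ∂x(ξ,z)/∂ξ`, the derivative of the Lamé function in its first argument. -/
noncomputable def lameY (τ ξ z : ℂ) : ℂ :=
  deriv (fun u => lame τ u z) ξ

/-- The Lax matrix `L_z(z)` of the isomonodromic system on the `n`-punctured torus. -/
noncomputable def LaxLz (τ : ℂ) {N n : ℕ} (zs : Fin n → ℂ)
    (A : Fin n → Matrix (Fin N) (Fin N) ℂ) (P Q : Fin N → ℂ) (z : ℂ) :
    Matrix (Fin N) (Fin N) ℂ :=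
  Matrix.of fun i j =>
    if i = j then
      P i + ∑ k, (deriv (theta1 τ) (z - zs k) / theta1 τ (z - zs k)) * A k i i
    else
      -(∑ k, lame τ (Q j - Q i) (z - zs k) * A k i j)

/-- The Lax matrix `L_τ(z)` generating the flow in the modular parameter `τ`. -/
noncomputable def LaxLtau (τ : ℂ) {N n : ℕ} (zs : Fin n → ℂ)
    (A : Fin n → Matrix (Fin N) (Fin N) ℂ) (Q : Fin N → ℂ) (z : ℂ) :
    Matrix (Fin N) (Fin N) ℂ :=
  Matrix.of fun i j =>
    if i = j then
      -(1/2) * ∑ k, (deriv (deriv (theta1 τ)) (z - zs k) / theta1 τ (z - zs k)) * A k i i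
    else
      -(∑ k, lameY τ (Q j - Q i) (z - zs k) * A k i j)

private lemma theta1_eq_jacobi (τ z : ℂ) :
    theta1 τ z = -I * Complex.exp ((Real.pi : ℂ) * I * τ / 4 + (Real.pi : ℂ) * I * z) *
      jacobiTheta₂ (z + τ/2 + 1/2) τ := by
  rw [theta1, jacobiTheta₂]
  conv_rhs => rw [mul_assoc, ← tsum_mul_left]
  congr 1
  refine tsum_congr fun n => ?_
  have hneg : ((-1 : ℂ)) ^ n = Complex.exp ((Real.pi : ℂ) * I * (n : ℂ)) := by
    rw [show (Real.pi : ℂ) * I * (n : ℂ) = (n : ℤ) * ((Real.pi : ℂ) * I) by push_cast; ring,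
      Complex.exp_int_mul, Complex.exp_pi_mul_I]
  rw [jacobiTheta₂_term, hneg, ← Complex.exp_add, ← Complex.exp_add]
  congr 1
  push_cast
  ring

private lemma theta1_differentiable {τ : ℂ} (hτ : 0 < τ.im) : Differentiable ℂ (theta1 τ) := by
  have h : theta1 τ = fun z => -I * Complex.exp ((Real.pi : ℂ) * I * τ / 4 + (Real.pi : ℂ) * I * z) *
      jacobiTheta₂ (z + τ/2 + 1/2) τ := funext fun z => theta1_eq_jacobi τ z
  rw [h]
  intro z
  refine DifferentiableAt.mul ?_ ?_
  · exact (differentiableAt_const _).mul (((differentiableAt_id.const_mul _).const_add _).cexp)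
  · exact (differentiableAt_jacobiTheta₂_fst (z + τ/2 + 1/2) hτ).comp z
      ((differentiableAt_id.add_const (τ/2)).add_const (1/2 : ℂ))

private lemma deriv_theta1_differentiable {τ : ℂ} (hτ : 0 < τ.im) :
    Differentiable ℂ (deriv (theta1 τ)) := by
  have h := ((theta1_differentiable hτ).differentiableOn.analyticOnNhd isOpen_univ).deriv
  exact fun z => (h z (Set.mem_univ z)).differentiableAt

private lemma theta1_shift (τ z : ℂ) :
    theta1 τ (z + τ) = -Complex.exp (-(Real.pi : ℂ) * I * τ - 2 * (Real.pi : ℂ) * I * z) *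
      theta1 τ z := by
  rw [theta1_eq_jacobi, theta1_eq_jacobi,
    show z + τ + τ/2 + 1/2 = (z + τ/2 + 1/2) + τ by ring, jacobiTheta₂_add_left']
  set T := jacobiTheta₂ (z + τ/2 + 1/2) τ
  rw [show -I * cexp ((Real.pi : ℂ) * I * τ / 4 + (Real.pi : ℂ) * I * (z + τ)) *
      (cexp (-(Real.pi : ℂ) * I * (τ + 2 * (z + τ/2 + 1/2))) * T)
      = -I * (cexp ((Real.pi : ℂ) * I * τ / 4 + (Real.pi : ℂ) * I * (z + τ)) *
        cexp (-(Real.pi : ℂ) * I * (τ + 2 * (z + τ/2 + 1/2)))) * T by ring, ← Complex.exp_add]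
  rw [show -cexp (-(Real.pi : ℂ) * I * τ - 2 * (Real.pi : ℂ) * I * z) *
      (-I * cexp ((Real.pi : ℂ) * I * τ / 4 + (Real.pi : ℂ) * I * z) * T)
      = I * (cexp (-(Real.pi : ℂ) * I * τ - 2 * (Real.pi : ℂ) * I * z) *
        cexp ((Real.pi : ℂ) * I * τ / 4 + (Real.pi : ℂ) * I * z)) * T by ring, ← Complex.exp_add]
  rw [show (Real.pi : ℂ) * I * τ / 4 + (Real.pi : ℂ) * I * (z + τ) +
      -(Real.pi : ℂ) * I * (τ + 2 * (z + τ/2 + 1/2))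
      = (-(Real.pi : ℂ) * I * τ - 2 * (Real.pi : ℂ) * I * z +
        ((Real.pi : ℂ) * I * τ / 4 + (Real.pi : ℂ) * I * z)) + -((Real.pi : ℂ) * I) by ring,
    Complex.exp_add, Complex.exp_neg, Complex.exp_pi_mul_I]
  ring

private lemma hasDerivAt_mu (c : ℂ) (z : ℂ) :
    HasDerivAt (fun w : ℂ => -Complex.exp (c - 2 * (Real.pi : ℂ) * I * w))
      (2 * (Real.pi : ℂ) * I * Complex.exp (c - 2 * (Real.pi : ℂ) * I * z)) z := by
  have h1 : HasDerivAt (fun w : ℂ => c - 2 * (Real.pi : ℂ) * I * w)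
      (-(2 * (Real.pi : ℂ) * I)) z := by
    simpa using ((hasDerivAt_id z).const_mul (2 * (Real.pi : ℂ) * I)).const_sub c
  have h2 := h1.cexp.fun_neg
  rw [show 2 * (Real.pi : ℂ) * I * Complex.exp (c - 2 * (Real.pi : ℂ) * I * z) =
      -(Complex.exp (c - 2 * (Real.pi : ℂ) * I * z) * -(2 * (Real.pi : ℂ) * I)) by ring]
  exact h2

private lemma deriv_theta1_shift {τ : ℂ} (hτ : 0 < τ.im) (z : ℂ) :
    deriv (theta1 τ) (z + τ) = -Complex.exp (-(Real.pi : ℂ) * I * τ - 2 * (Real.pi : ℂ) * I * z) *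
      (deriv (theta1 τ) z - 2 * (Real.pi : ℂ) * I * theta1 τ z) := by
  have h0 : (fun w => theta1 τ (w + τ)) =
      fun w => -Complex.exp (-(Real.pi : ℂ) * I * τ - 2 * (Real.pi : ℂ) * I * w) * theta1 τ w :=
    funext fun w => theta1_shift τ w
  have h1 : deriv (fun w => theta1 τ (w + τ)) z = deriv (theta1 τ) (z + τ) :=
    deriv_comp_add_const _ _ _
  rw [← h1, h0]
  have hmu : HasDerivAt (fun w : ℂ =>
      -Complex.exp (-(Real.pi : ℂ) * I * τ - 2 * (Real.pi : ℂ) * I * w))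
      (2 * (Real.pi : ℂ) * I *
        Complex.exp (-(Real.pi : ℂ) * I * τ - 2 * (Real.pi : ℂ) * I * z)) z := by
    have := hasDerivAt_mu (-(Real.pi : ℂ) * I * τ) z
    simpa [sub_sub] using this
  rw [(hmu.fun_mul ((theta1_differentiable hτ z).hasDerivAt)).deriv]
  ring

private lemma deriv2_theta1_shift {τ : ℂ} (hτ : 0 < τ.im) (z : ℂ) :
    deriv (deriv (theta1 τ)) (z + τ) =
      -Complex.exp (-(Real.pi : ℂ) * I * τ - 2 * (Real.pi : ℂ) * I * z) *
      (deriv (deriv (theta1 τ)) z - 4 * (Real.pi : ℂ) * I * deriv (theta1 τ) z -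
        4 * (Real.pi : ℂ) ^ 2 * theta1 τ z) := by
  have h0 : (fun w => deriv (theta1 τ) (w + τ)) =
      fun w => -Complex.exp (-(Real.pi : ℂ) * I * τ - 2 * (Real.pi : ℂ) * I * w) *
        (deriv (theta1 τ) w - 2 * (Real.pi : ℂ) * I * theta1 τ w) :=
    funext fun w => deriv_theta1_shift hτ w
  have h1 : deriv (fun w => deriv (theta1 τ) (w + τ)) z = deriv (deriv (theta1 τ)) (z + τ) :=
    deriv_comp_add_const _ _ _
  rw [← h1, h0]
  have hmu : HasDerivAt (fun w : ℂ =>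
      -Complex.exp (-(Real.pi : ℂ) * I * τ - 2 * (Real.pi : ℂ) * I * w))
      (2 * (Real.pi : ℂ) * I *
        Complex.exp (-(Real.pi : ℂ) * I * τ - 2 * (Real.pi : ℂ) * I * z)) z := by
    have := hasDerivAt_mu (-(Real.pi : ℂ) * I * τ) z
    simpa [sub_sub] using this
  have hg : HasDerivAt (fun w => deriv (theta1 τ) w - 2 * (Real.pi : ℂ) * I * theta1 τ w)
      (deriv (deriv (theta1 τ)) z - 2 * (Real.pi : ℂ) * I * deriv (theta1 τ) z) z :=
    ((deriv_theta1_differentiable hτ z).hasDerivAt).sub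
      (((theta1_differentiable hτ z).hasDerivAt).const_mul _)
  rw [(hmu.fun_mul hg).deriv]
  have hI : (I : ℂ) ^ 2 = -1 := Complex.I_sq
  ring_nf
  rw [Complex.I_sq]
  ring

private lemma lame_shift (τ w u : ℂ) :
    lame τ u (w + τ) = Complex.exp (2 * (Real.pi : ℂ) * I * u) * lame τ u w := by
  have hne : -Complex.exp (-(Real.pi : ℂ) * I * τ - 2 * (Real.pi : ℂ) * I * w) ≠ 0 :=
    neg_ne_zero.mpr (Complex.exp_ne_zero _)
  rw [lame, lame, show w + τ - u = (w - u) + τ by ring, theta1_shift, theta1_shift]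
  rw [show -cexp (-(Real.pi : ℂ) * I * τ - 2 * (Real.pi : ℂ) * I * (w - u)) * theta1 τ (w - u) *
        deriv (theta1 τ) 0
      = (-cexp (-(Real.pi : ℂ) * I * τ - 2 * (Real.pi : ℂ) * I * w)) *
        (cexp (2 * (Real.pi : ℂ) * I * u) * (theta1 τ (w - u) * deriv (theta1 τ) 0)) by
        rw [show -(Real.pi : ℂ) * I * τ - 2 * (Real.pi : ℂ) * I * (w - u)
          = (-(Real.pi : ℂ) * I * τ - 2 * (Real.pi : ℂ) * I * w) + 2 * (Real.pi : ℂ) * I * u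
          by ring, Complex.exp_add]; ring,
    show -cexp (-(Real.pi : ℂ) * I * τ - 2 * (Real.pi : ℂ) * I * w) * theta1 τ w * theta1 τ u
      = (-cexp (-(Real.pi : ℂ) * I * τ - 2 * (Real.pi : ℂ) * I * w)) *
        (theta1 τ w * theta1 τ u) by ring,
    mul_div_mul_left _ _ hne, mul_div_assoc]

private lemma lame_differentiable {τ : ℂ} (hτ : 0 < τ.im) {w ξ : ℂ} (hw : theta1 τ w ≠ 0)
    (hξ : theta1 τ ξ ≠ 0) : DifferentiableAt ℂ (fun u => lame τ u w) ξ := by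
  have h1 : DifferentiableAt ℂ (fun u : ℂ => theta1 τ (w - u)) ξ :=
    (theta1_differentiable hτ (w - ξ)).comp ξ ((differentiableAt_const w).sub differentiableAt_id)
  refine DifferentiableAt.div (h1.mul_const _)
    ((differentiableAt_const _).mul (theta1_differentiable hτ ξ)) (mul_ne_zero hw hξ)

private lemma lameY_shift {τ : ℂ} (hτ : 0 < τ.im) {w ξ : ℂ} (hw : theta1 τ w ≠ 0)
    (hξ : theta1 τ ξ ≠ 0) :
    lameY τ ξ (w + τ) = Complex.exp (2 * (Real.pi : ℂ) * I * ξ) *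
      (lameY τ ξ w + 2 * (Real.pi : ℂ) * I * lame τ ξ w) := by
  rw [lameY]
  have h0 : (fun u => lame τ u (w + τ)) =
      fun u => Complex.exp (2 * (Real.pi : ℂ) * I * u) * lame τ u w :=
    funext fun u => lame_shift τ w u
  rw [h0]
  have hE : HasDerivAt (fun u : ℂ => Complex.exp (2 * (Real.pi : ℂ) * I * u))
      (2 * (Real.pi : ℂ) * I * Complex.exp (2 * (Real.pi : ℂ) * I * ξ)) ξ := by
    have := ((hasDerivAt_id ξ).const_mul (2 * (Real.pi : ℂ) * I)).cexp
    simpa [mul_comm] using this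
  rw [(hE.fun_mul (lame_differentiable hτ hw hξ).hasDerivAt).deriv, lameY]
  ring

private lemma ratio2_shift {τ : ℂ} (hτ : 0 < τ.im) {w : ℂ} (hw : theta1 τ w ≠ 0) :
    deriv (deriv (theta1 τ)) (w + τ) / theta1 τ (w + τ) =
      deriv (deriv (theta1 τ)) w / theta1 τ w -
      4 * (Real.pi : ℂ) * I * (deriv (theta1 τ) w / theta1 τ w) - 4 * (Real.pi : ℂ) ^ 2 := by
  have hne : -Complex.exp (-(Real.pi : ℂ) * I * τ - 2 * (Real.pi : ℂ) * I * w) ≠ 0 :=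
    neg_ne_zero.mpr (Complex.exp_ne_zero _)
  rw [deriv2_theta1_shift hτ, theta1_shift, mul_div_mul_left _ _ hne]
  field_simp

/-- Twisted periodicity of the Lax matrix `L_τ`:
`L_τ(z+τ) = E⁻¹·(L_τ(z) + 2πi·L_z(z))·E - 2πi·diag(P₁,…,P_N)`. -/
theorem LaxLtau_shift (τ : ℂ) (hτ : 0 < τ.im) (N n : ℕ) (hN : 1 ≤ N) (hn : 1 ≤ n)
    (zs : Fin n → ℂ) (A : Fin n → Matrix (Fin N) (Fin N) ℂ)
    (hA : ∀ i, ∑ k, A k i i = 0)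
    (P Q : Fin N → ℂ) (z : ℂ)
    (h1 : ∀ k, theta1 τ (z - zs k) ≠ 0)
    (h2 : ∀ k, theta1 τ (z + τ - zs k) ≠ 0)
    (h3 : ∀ i j, i ≠ j → theta1 τ (Q j - Q i) ≠ 0) :
    LaxLtau τ zs A Q (z + τ) =
      (Matrix.diagonal fun i => Complex.exp (2 * (Real.pi : ℂ) * Complex.I * Q i))⁻¹ *
        (LaxLtau τ zs A Q z +
          (2 * (Real.pi : ℂ) * Complex.I) • LaxLz τ zs A P Q z) *
        (Matrix.diagonal fun i => Complex.exp (2 * (Real.pi : ℂ) * Complex.I * Q i)) -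
      (2 * (Real.pi : ℂ) * Complex.I) • Matrix.diagonal P := by
  set v : Fin N → ℂ := fun i => Complex.exp (2 * (Real.pi : ℂ) * I * Q i) with hv_def
  have hv : ∀ i, v i ≠ 0 := fun i => Complex.exp_ne_zero _
  have hEinv : (Matrix.diagonal v)⁻¹ = Matrix.diagonal (fun i => (v i)⁻¹) := by
    apply Matrix.inv_eq_left_inv
    rw [Matrix.diagonal_mul_diagonal,
      show (fun i => (v i)⁻¹ * v i) = fun _ => (1 : ℂ) from funext fun i => inv_mul_cancel₀ (hv i),
      Matrix.diagonal_one]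
  have hzz : ∀ k, z + τ - zs k = (z - zs k) + τ := fun k => by ring
  ext i j
  simp only [hEinv, Matrix.sub_apply, Matrix.mul_diagonal, Matrix.diagonal_mul,
    Matrix.add_apply, Matrix.smul_apply, smul_eq_mul, LaxLtau, LaxLz, Matrix.of_apply]
  by_cases hij : i = j
  · subst hij
    simp only [eq_self_iff_true, if_true, Matrix.diagonal_apply_eq]
    rw [Finset.sum_congr rfl (fun k _ => by
      rw [hzz k, ratio2_shift hτ (h1 k)])]
    simp only [sub_mul]
    rw [Finset.sum_sub_distrib, Finset.sum_sub_distrib]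
    have e1 : ∑ k, 4 * (Real.pi : ℂ) * I * (deriv (theta1 τ) (z - zs k) / theta1 τ (z - zs k))
        * A k i i = 4 * (Real.pi : ℂ) * I *
        ∑ k, (deriv (theta1 τ) (z - zs k) / theta1 τ (z - zs k)) * A k i i := by
      rw [Finset.mul_sum]; exact Finset.sum_congr rfl fun k _ => by ring
    have e2 : ∑ k, 4 * (Real.pi : ℂ) ^ 2 * A k i i = 0 := by
      rw [← Finset.mul_sum, hA i, mul_zero]
    rw [e1, e2, sub_zero,
      show ∀ X : ℂ, (v i)⁻¹ * X * v i = X from fun X => by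
        rw [mul_comm, ← mul_assoc, mul_inv_cancel₀ (hv i), one_mul]]
    ring
  · simp only [if_neg hij, Matrix.diagonal_apply_ne _ hij]
    rw [Finset.sum_congr rfl (fun k _ => by
      rw [hzz k, lameY_shift hτ (h1 k) (h3 i j hij)])]
    have key : ∑ k, Complex.exp (2 * (Real.pi : ℂ) * I * (Q j - Q i)) *
        (lameY τ (Q j - Q i) (z - zs k) + 2 * (Real.pi : ℂ) * I *
          lame τ (Q j - Q i) (z - zs k)) * A k i j
        = Complex.exp (2 * (Real.pi : ℂ) * I * (Q j - Q i)) *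
          ((∑ k, lameY τ (Q j - Q i) (z - zs k) * A k i j) +
            2 * (Real.pi : ℂ) * I * ∑ k, lame τ (Q j - Q i) (z - zs k) * A k i j) := by
      rw [mul_add, Finset.mul_sum, Finset.mul_sum, Finset.mul_sum, ← Finset.sum_add_distrib]
      exact Finset.sum_congr rfl fun k _ => by ring
    rw [key, show 2 * (Real.pi : ℂ) * I * (Q j - Q i)
        = 2 * (Real.pi : ℂ) * I * Q j + -(2 * (Real.pi : ℂ) * I * Q i) by ring,
      Complex.exp_add, show (v i)⁻¹ = Complex.exp (-(2 * (Real.pi : ℂ) * I * Q i)) by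
        rw [hv_def, ← Complex.exp_neg], hv_def]
    ring
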